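/- The simplicial cochain S_2-algebra S^*(S^1, ℤ) of S^1 = Δ[1]/∂Δ[1] is not weakly equivalent as an S_2-algebra to any commutative dg algebra (regarded as an S_2-algebra with trivial braces); in particular, it is not weakly equivalent as an S_2-algebra to its cohomology H^*(S^1, ℤ). Indeed, for the mod 2 class [x] of the dual of the nondegenerate 1-simplex, the natural operation Sq^0([x]) = [x{x}] equals [x] ≠ 0 in H^1(S^*(S^1, ℤ/2)), while Sq^{n−1} vanishes identically on any commutative algebra with trivial braces. -/

import Mathlib

/-! # Common framework : differential graded algebras, brace ($\mathcal S_2$) algebras,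
dg bialgebras (Hopf algebras), bar and cobar constructions, twisting morphisms. -/

open scoped TensorProduct

noncomputable section

set_option maxHeartbeats 1000000

/-- The Koszul sign `(-1)^n` for `n : ℤ`. -/
def ksgn (n : ℤ) : ℤ := ((Int.negOnePow n : ℤˣ) : ℤ)

/-- Concatenation of a list of lists. -/
def lflat {α : Type} : List (List α) → List α
  | [] => []
  | l :: ls => l ++ lflat ls

/-- All splittings of a list into a prefix and a suffix. -/
def splits2 {α : Type} : List α → List (List α × List α)
  | [] => [([], [])]
  | a :: l => ([], a :: l) :: (splits2 l).map (fun q => (a :: q.1, q.2))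

/-- All ways of merging two adjacent entries of a list using the multiplication. -/
def adjMerges {α : Type} [Mul α] : List α → List (List α)
  | a :: b :: l => ((a * b) :: l) :: (adjMerges (b :: l)).map (fun m => a :: m)
  | _ => []

/-- The terms `(sign exponent, list with `dd` applied in one slot)` appearing when a
degree `-1` operator is applied slotwise to a list of homogeneous elements, with the
Koszul sign exponent accumulating the degrees of the entries passed over. -/
def dSlotTerms {α : Type} (dd : α → α) : ℤ → List (α × ℤ) → List (ℤ × List α)
  | _, [] => []
  | e, (y, b) :: t =>
      (e, dd y :: t.map Prod.fst) :: (dSlotTerms dd (e + b) t).map (fun q => (q.1, y :: q.2))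

/-- Alternating sum `Σ (-1)^(e+k) • l k`. -/
def altSum {M : Type} [AddCommGroup M] : ℤ → List M → M
  | _, [] => 0
  | e, a :: l => ksgn e • a + altSum (e + 1) l

/-- Total degree of a graded word. -/
def wdeg {α : Type} (w : List (α × ℤ)) : ℤ := (w.map Prod.snd).sum

/-- Total suspended degree `Σ (|aᵢ| + 1)` of a graded word. -/
def wdegS {α : Type} (w : List (α × ℤ)) : ℤ := (w.map (fun p => p.2 + 1)).sum

/-- Total desuspended degree `Σ (|aᵢ| - 1)` of a graded word. -/
def wdegC {α : Type} (w : List (α × ℤ)) : ℤ := (w.map (fun p => p.2 - 1)).sum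

/-- All interleavings (with Koszul sign exponents) of the brace arguments `xs` into the
arguments `ys`, used to state the brace associativity identity. -/
def ileave {α : Type} (br : α → List α → α) :
    List (α × ℤ) → List (α × ℤ) → ℤ → List (ℤ × List α)
  | [], ys, _ => [(0, ys.map Prod.fst)]
  | (x, dx) :: xs, ys, acc =>
      lflat ((splits2 ys).map (fun q =>
        lflat ((splits2 q.2).map (fun q' =>
          (ileave br xs q'.2 (acc + wdegS q.1 + wdegS q'.1)).map
            (fun r => (r.1 + (dx + 1) * (acc + wdegS q.1),
              q.1.map Prod.fst ++ br x (q'.1.map Prod.fst) :: r.2))))))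
  termination_by xs => xs.length

/-- `Σ_{i=1}^{k} (k - i) * (wᵢ - 1)`, computed with descending coefficient `j`. -/
def hopfAlphaAux : ℤ → List ℤ → ℤ
  | _, [] => 0
  | j, a :: l => j * (a - 1) + hopfAlphaAux (j - 1) l

/-- The sign exponent `α = k (d₁ - 1) + Σ_{i=1}^k (k - i)(|c̄₂⁽ⁱ⁾| - 1)` from the
definition of Hopf twisting morphisms. -/
def hopfAlpha (d1 : ℤ) (degs : List ℤ) : ℤ :=
  (degs.length : ℤ) * (d1 - 1) + hopfAlphaAux ((degs.length : ℤ) - 1) degs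

/-- Auxiliary accumulator for the cobar first–brace sign. -/
def cbAlphaAux : ℤ → List (ℤ × ℤ) → ℤ
  | _, [] => 0
  | acc, (dxj, dyj) :: l => dxj * acc + cbAlphaAux (acc + (dyj - 1)) l

/-- The sign exponent `α = Σ_{j=2}^q |x⁽ʲ⁾| Σ_{k<j} |[y_k]| + |x| - 1` from the
definition of the first brace on the cobar construction. -/
def cobarAlpha (dx : ℤ) (dxs dys : List ℤ) : ℤ := dx - 1 + cbAlphaAux 0 (dxs.zip dys)

/-- The `dd`-part of the bar differential with its sign exponents `m_i`. -/
def barD1 {α : Type} (dd : α → α) : ℤ → List (α × ℤ) → List (ℤ × List (α × ℤ))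
  | _, [] => []
  | m, (a, i) :: t =>
      (m, (dd a, i - 1) :: t) :: (barD1 dd (m + i + 1) t).map (fun q => (q.1, (a, i) :: q.2))

/-- The merging part of the bar differential with its sign exponents `m_i`. -/
def barD2 {α : Type} [Mul α] : ℤ → List (α × ℤ) → List (ℤ × List (α × ℤ))
  | _, [] => []
  | _, [_] => []
  | m, (a, i) :: (b, j) :: t =>
      (m + i + 1, (a * b, i + j) :: t) ::
        (barD2 (m + i + 1) ((b, j) :: t)).map (fun q => (q.1, (a, i) :: q.2))

/-- An augmented differential graded algebra over `R` (chain complexes have degree `-1`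
differentials; the grading is recorded as an internal direct sum decomposition). -/
structure DGAlgebra (R : Type) [CommRing R] where
  X : Type
  [ringX : Ring X]
  [algX : Algebra R X]
  grading : ℤ → Submodule R X
  isInternal : DirectSum.IsInternal grading
  one_mem : (1 : X) ∈ grading 0
  mul_mem : ∀ {i j : ℤ} {x y : X}, x ∈ grading i → y ∈ grading j → x * y ∈ grading (i + j)
  d : X →ₗ[R] X
  d_mem : ∀ {i : ℤ} {x : X}, x ∈ grading i → d x ∈ grading (i - 1)
  d_sq : ∀ x, d (d x) = 0
  leibniz : ∀ {i : ℤ} {x : X}, x ∈ grading i → ∀ y, d (x * y) = d x * y + ksgn i • (x * d y)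
  aug : X →ₐ[R] R
  aug_d : ∀ x, aug (d x) = 0
  aug_grading : ∀ {i : ℤ} {x : X}, i ≠ 0 → x ∈ grading i → aug x = 0

attribute [instance] DGAlgebra.ringX DGAlgebra.algX

/-- A word with homogeneous entries of the recorded degrees. -/
def HomogW {R : Type} [CommRing R] (A : DGAlgebra R) (w : List (A.X × ℤ)) : Prop :=
  ∀ p ∈ w, p.1 ∈ A.grading p.2

/-- A word with homogeneous entries from the augmentation ideal. -/
def BarW {R : Type} [CommRing R] (A : DGAlgebra R) (w : List (A.X × ℤ)) : Prop :=
  ∀ p ∈ w, p.1 ∈ A.grading p.2 ∧ A.aug p.1 = 0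

/-- Brace operations on an augmented dg algebra, satisfying the Gerstenhaber–Voronov
brace associativity, differential and multiplication identities (with Berger–Fresse type
signs).  This is the structure of an algebra over the surjection operad `S₂`. -/
structure BraceStr {R : Type} [CommRing R] (A : DGAlgebra R) where
  brace : A.X → List A.X → A.X
  brace_nil : ∀ x, brace x [] = x
  brace_one : ∀ x l, (1 : A.X) ∈ l → brace x l = 0
  brace_addl : ∀ x x' l, brace (x + x') l = brace x l + brace x' l
  brace_smull : ∀ (r : R) x l, brace (r • x) l = r • brace x l
  brace_adda : ∀ x p (a b : A.X) s,
    brace x (p ++ (a + b) :: s) = brace x (p ++ a :: s) + brace x (p ++ b :: s)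
  brace_smula : ∀ x p (r : R) (a : A.X) s, brace x (p ++ (r • a) :: s) = r • brace x (p ++ a :: s)
  brace_mem : ∀ {i : ℤ} {x : A.X}, x ∈ A.grading i → ∀ w : List (A.X × ℤ), HomogW A w →
    brace x (w.map Prod.fst) ∈ A.grading (i + wdeg w + w.length)
  brace_diff : ∀ {i : ℤ} {x : A.X}, x ∈ A.grading i → ∀ (p0 : A.X × ℤ) (t : List (A.X × ℤ)),
    HomogW A (p0 :: t) →
    A.d (brace x (p0.1 :: t.map Prod.fst)) =
      ksgn ((t.length : ℤ) + 1) •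
          (brace x (p0.1 :: t.map Prod.fst).dropLast *
            (p0.1 :: t.map Prod.fst).getLast (List.cons_ne_nil _ _)) +
        ksgn (i * p0.2 + (t.length : ℤ) * p0.2) • (p0.1 * brace x (t.map Prod.fst)) +
        altSum 1 ((adjMerges (p0.1 :: t.map Prod.fst)).map (fun m => brace x m)) +
        ksgn ((t.length : ℤ) + 1) • brace (A.d x) (p0.1 :: t.map Prod.fst) +
        ((dSlotTerms (fun y => A.d y) ((t.length : ℤ) + 1 + i) (p0 :: t)).map
            (fun q => ksgn q.1 • brace x q.2)).sum
  brace_mul : ∀ {i j : ℤ} {x y : A.X}, x ∈ A.grading i → y ∈ A.grading j →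
    ∀ w : List (A.X × ℤ), HomogW A w →
    brace (x * y) (w.map Prod.fst) =
      ((splits2 w).map (fun q =>
        ksgn (wdeg q.1 * j + (q.2.length : ℤ) * (i + wdeg q.1)) •
          (brace x (q.1.map Prod.fst) * brace y (q.2.map Prod.fst)))).sum
  brace_assoc : ∀ {i : ℤ} {x : A.X}, x ∈ A.grading i → ∀ xs ys : List (A.X × ℤ),
    HomogW A xs → HomogW A ys →
    brace (brace x (xs.map Prod.fst)) (ys.map Prod.fst) =
      ((ileave brace xs ys 0).map (fun q => ksgn q.1 • brace x q.2)).sum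

/-- An `S₂`-algebra over `R`: an augmented dg algebra together with brace operations. -/
structure S2Algebra (R : Type) [CommRing R] where
  alg : DGAlgebra R
  br : BraceStr alg

/-- A dg bialgebra (what the paper calls a dg Hopf algebra): an augmented dg algebra which
is simultaneously a coaugmented dg coalgebra (counit = augmentation, coaugmentation = unit)
such that the comultiplication is a map of algebras. -/
structure DGBialgebra (R : Type) [CommRing R] where
  alg : DGAlgebra R
  comul : alg.X →ₗ[R] alg.X ⊗[R] alg.X
  coassoc : (TensorProduct.assoc R alg.X alg.X alg.X).toLinearMap.comp
        ((TensorProduct.map comul LinearMap.id).comp comul)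
      = (TensorProduct.map LinearMap.id comul).comp comul
  counit_left : ∀ x : alg.X,
    TensorProduct.lid R alg.X (TensorProduct.map alg.aug.toLinearMap LinearMap.id (comul x)) = x
  counit_right : ∀ x : alg.X,
    TensorProduct.rid R alg.X (TensorProduct.map LinearMap.id alg.aug.toLinearMap (comul x)) = x
  comul_one : comul 1 = 1 ⊗ₜ 1
  comul_mul : ∀ x y : alg.X, comul (x * y) = comul x * comul y
  comul_grading : ∀ {n : ℤ} {x : alg.X}, x ∈ alg.grading n →
    comul x ∈ ⨆ p : {p : ℤ × ℤ // p.1 + p.2 = n},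
      LinearMap.range (TensorProduct.map (alg.grading p.1.1).subtype (alg.grading p.1.2).subtype)
  sop : alg.X →ₗ[R] alg.X
  sop_spec : ∀ {i : ℤ} {x : alg.X}, x ∈ alg.grading i → sop x = ksgn i • x
  comul_d : comul.comp alg.d
      = (TensorProduct.map alg.d LinearMap.id + TensorProduct.map sop alg.d).comp comul

/-- The reduced comultiplication `Δ̄ : C → C ⊗ C`. -/
def DGBialgebra.redComul {R : Type} [CommRing R] (H : DGBialgebra R) :
    H.alg.X →ₗ[R] H.alg.X ⊗[R] H.alg.X :=
  H.comul - (TensorProduct.mk R H.alg.X H.alg.X).flip 1 - TensorProduct.mk R H.alg.X H.alg.X 1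
    + LinearMap.smulRight H.alg.aug.toLinearMap ((1 : H.alg.X) ⊗ₜ (1 : H.alg.X))

/-- `H.IsRedExp k c L` expresses that the list `L` of homogeneous words of length `k + 1`
is an expansion (in sumless Sweedler style) of the iterated reduced diagonal
`Δ̄⁽ᵏ⁺¹⁾(c) = c̄⁽¹⁾ ⊗ ⋯ ⊗ c̄⁽ᵏ⁺¹⁾`. -/
def DGBialgebra.IsRedExp {R : Type} [CommRing R] (H : DGBialgebra R) :
    ℕ → H.alg.X → List (List (H.alg.X × ℤ)) → Prop
  | 0, c, L =>
      (∀ w ∈ L, ∃ p : H.alg.X × ℤ, w = [p] ∧ p.1 ∈ H.alg.grading p.2 ∧ H.alg.aug p.1 = 0) ∧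
        c = (L.map (fun w => (w.map Prod.fst).sum)).sum
  | k + 1, c, L => ∃ (n : ℕ) (a : Fin n → H.alg.X × ℤ) (b : Fin n → H.alg.X)
      (Ls : Fin n → List (List (H.alg.X × ℤ))),
      (∀ s, (a s).1 ∈ H.alg.grading (a s).2 ∧ H.alg.aug (a s).1 = 0) ∧
      H.redComul c = ∑ s, (a s).1 ⊗ₜ[R] b s ∧
      (∀ s, DGBialgebra.IsRedExp H k (b s) (Ls s)) ∧
      L = lflat (List.ofFn (fun s => (Ls s).map (fun w => a s :: w)))

/-- `H.IsDiagExp k c L` : `L` is an expansion of the iterated (unreduced) diagonal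
`Δ⁽ᵏ⁺¹⁾(c)` into homogeneous words of length `k + 1`. -/
def DGBialgebra.IsDiagExp {R : Type} [CommRing R] (H : DGBialgebra R) :
    ℕ → H.alg.X → List (List (H.alg.X × ℤ)) → Prop
  | 0, c, L =>
      (∀ w ∈ L, ∃ p : H.alg.X × ℤ, w = [p] ∧ p.1 ∈ H.alg.grading p.2) ∧
        c = (L.map (fun w => (w.map Prod.fst).sum)).sum
  | k + 1, c, L => ∃ (n : ℕ) (a : Fin n → H.alg.X × ℤ) (b : Fin n → H.alg.X)
      (Ls : Fin n → List (List (H.alg.X × ℤ))),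
      (∀ s, (a s).1 ∈ H.alg.grading (a s).2) ∧
      H.comul c = ∑ s, (a s).1 ⊗ₜ[R] b s ∧
      (∀ s, DGBialgebra.IsDiagExp H k (b s) (Ls s)) ∧
      L = lflat (List.ofFn (fun s => (Ls s).map (fun w => a s :: w)))

/-- Conilpotency: for every element the iterated reduced diagonals eventually vanish. -/
def DGBialgebra.Conil {R : Type} [CommRing R] (H : DGBialgebra R) : Prop :=
  ∀ c : H.alg.X, H.alg.aug c = 0 → ∃ N : ℕ, ∀ k ≥ N, H.IsRedExp k c []

/-- A twisting morphism from a dg bialgebra to an augmented dg algebra: a degree `-1`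
linear map `f` with `d ∘ f + f ∘ d = m ∘ (f ⊗ f) ∘ Δ̄`. -/
def IsTwisting {R : Type} [CommRing R] (H : DGBialgebra R) (A : DGAlgebra R)
    (f : H.alg.X →ₗ[R] A.X) : Prop :=
  (∀ {i : ℤ} {x : H.alg.X}, x ∈ H.alg.grading i → f x ∈ A.grading (i - 1)) ∧
    f 1 = 0 ∧
    A.d.comp f + f.comp H.alg.d
      = (LinearMap.mul' R A.X).comp ((TensorProduct.map f f).comp H.redComul)

/-- The signed sum `Σ (-1)^α f(c₁){f(c̄₂⁽¹⁾), …, f(c̄₂⁽ᵏ⁾)}` over a family `L` of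
Sweedler words, where `α = k(|c₁|-1) + Σ (k-i)(|c̄₂⁽ⁱ⁾|-1)`. -/
def braceSum {R : Type} [CommRing R] (H : DGBialgebra R) (A : S2Algebra R)
    (f : H.alg.X →ₗ[R] A.alg.X) (x1 : A.alg.X) (d1 : ℤ) (L : List (List (H.alg.X × ℤ))) :
    A.alg.X :=
  (L.map (fun w =>
    ksgn (hopfAlpha d1 (w.map Prod.snd)) • A.br.brace x1 (w.map (fun p => f p.1)))).sum

/-- The Hopf twisting morphism identity for the single pair `(u, v)`:
`f(uv) = Σ (-1)^α f(u){f(v̄⁽¹⁾), …, f(v̄⁽ᵏ⁾)}`. -/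
def HopfPair {R : Type} [CommRing R] (H : DGBialgebra R) (A : S2Algebra R)
    (f : H.alg.X →ₗ[R] A.alg.X) (u v : H.alg.X) : Prop :=
  ∀ (d1 : ℤ), u ∈ H.alg.grading d1 → H.alg.aug u = 0 → H.alg.aug v = 0 →
    ∀ (N : ℕ) (Ls : ℕ → List (List (H.alg.X × ℤ))),
      (∀ k, H.IsRedExp k v (Ls k)) → (∀ k, N ≤ k → Ls k = []) →
      f (u * v) = ((List.range N).map (fun k => braceSum H A f (f u) d1 (Ls k))).sum

/-- A twisting morphism into an `S₂`-algebra is Hopf if the Hopf identity holds for all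
pairs of augmentation-ideal elements. -/
def IsHopfTw {R : Type} [CommRing R] (H : DGBialgebra R) (A : S2Algebra R)
    (f : H.alg.X →ₗ[R] A.alg.X) : Prop :=
  ∀ u v : H.alg.X, HopfPair H A f u v

/-- A chain map inducing an isomorphism on homology (a weak equivalence). -/
def QIso {R : Type} [CommRing R] {X Y : Type} [AddCommGroup X] [Module R X]
    [AddCommGroup Y] [Module R Y] (dX : X →ₗ[R] X) (dY : Y →ₗ[R] Y) (f : X →ₗ[R] Y) : Prop :=
  (∀ x, f (dX x) = dY (f x)) ∧
    (∀ y, dY y = 0 → ∃ x z, dX x = 0 ∧ y = f x + dY z) ∧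
    (∀ x, dX x = 0 → (∃ z, f x = dY z) → ∃ w, x = dX w)

/-- Morphisms of augmented dg algebras. -/
structure DGAlgHom {R : Type} [CommRing R] (A B : DGAlgebra R) where
  f : A.X →ₐ[R] B.X
  map_grading : ∀ {i : ℤ} {x : A.X}, x ∈ A.grading i → f x ∈ B.grading i
  map_d : ∀ x, f (A.d x) = B.d (f x)
  map_aug : ∀ x, B.aug (f x) = A.aug x

/-- Morphisms of `S₂`-algebras. -/
structure S2AlgHom {R : Type} [CommRing R] (A B : S2Algebra R) where
  f : A.alg.X →ₐ[R] B.alg.X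
  map_grading : ∀ {i : ℤ} {x : A.alg.X}, x ∈ A.alg.grading i → f x ∈ B.alg.grading i
  map_d : ∀ x, f (A.alg.d x) = B.alg.d (f x)
  map_aug : ∀ x, B.alg.aug (f x) = A.alg.aug x
  map_brace : ∀ x l, f (A.br.brace x l) = B.br.brace (f x) (l.map (fun y => f y))

/-- Morphisms of dg bialgebras. -/
structure DGBialgHom {R : Type} [CommRing R] (H K : DGBialgebra R) where
  f : H.alg.X →ₐ[R] K.alg.X
  map_grading : ∀ {i : ℤ} {x : H.alg.X}, x ∈ H.alg.grading i → f x ∈ K.alg.grading i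
  map_d : ∀ x, f (H.alg.d x) = K.alg.d (f x)
  map_aug : ∀ x, K.alg.aug (f x) = H.alg.aug x
  map_comul : ∀ x, K.comul (f x) = TensorProduct.map f.toLinearMap f.toLinearMap (H.comul x)

/-- Zig-zags of weak equivalences of `S₂`-algebras. -/
inductive S2ZigZag {R : Type} [CommRing R] : S2Algebra R → S2Algebra R → Prop
  | refl (A : S2Algebra R) : S2ZigZag A A
  | fwd {A B C : S2Algebra R} (f : S2AlgHom A B)
      (hf : QIso A.alg.d B.alg.d f.f.toLinearMap) (h : S2ZigZag B C) : S2ZigZag A C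
  | bwd {A B C : S2Algebra R} (f : S2AlgHom B A)
      (hf : QIso B.alg.d A.alg.d f.f.toLinearMap) (h : S2ZigZag B C) : S2ZigZag A C

/-- Zig-zags of weak equivalences of dg bialgebras. -/
inductive BialgZigZag {R : Type} [CommRing R] : DGBialgebra R → DGBialgebra R → Prop
  | refl (H : DGBialgebra R) : BialgZigZag H H
  | fwd {A B C : DGBialgebra R} (f : DGBialgHom A B)
      (hf : QIso A.alg.d B.alg.d f.f.toLinearMap) (h : BialgZigZag B C) : BialgZigZag A C
  | bwd {A B C : DGBialgebra R} (f : DGBialgHom B A)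
      (hf : QIso B.alg.d A.alg.d f.f.toLinearMap) (h : BialgZigZag B C) : BialgZigZag A C
/-- A realization of the bar construction `BA` of an `S₂`-algebra `A`, as the
Gerstenhaber–Voronov dg Hopf algebra: the underlying coalgebra is the tensor coalgebra
`T(ΣĀ)` (words `wd [a₁|⋯|a_k]`, deconcatenation comultiplication, bar differential), with
the left non-decreasing multiplication determined by the braces. -/
structure BarS2 {R : Type} [CommRing R] (A : S2Algebra R) where
  H : DGBialgebra R
  wd : List (A.alg.X × ℤ) → H.alg.X
  wd_nil : wd [] = 1
  wd_add : ∀ p (a b : A.alg.X) (i : ℤ) s,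
    wd (p ++ (a + b, i) :: s) = wd (p ++ (a, i) :: s) + wd (p ++ (b, i) :: s)
  wd_smul : ∀ p (r : R) (a : A.alg.X) (i : ℤ) s,
    wd (p ++ (r • a, i) :: s) = r • wd (p ++ (a, i) :: s)
  wd_mem : ∀ w, BarW A.alg w → wd w ∈ H.alg.grading (wdegS w)
  wd_aug : ∀ w, BarW A.alg w → w ≠ [] → H.alg.aug (wd w) = 0
  wd_d : ∀ w, BarW A.alg w →
    H.alg.d (wd w) =
      -(((barD1 (fun a => A.alg.d a) 0 w).map (fun q => ksgn q.1 • wd q.2)).sum) +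
        ((barD2 0 w).map (fun q => ksgn q.1 • wd q.2)).sum
  wd_comul : ∀ w, BarW A.alg w →
    H.comul (wd w) = ((splits2 w).map (fun q => wd q.1 ⊗ₜ[R] wd q.2)).sum
  span : ∀ x : H.alg.X, x ∈ Submodule.span R {y | ∃ w, BarW A.alg w ∧ y = wd w}
  free : ∀ (M : Type) [AddCommGroup M] [Module R M] (g : List (A.alg.X × ℤ) → M),
    (∀ p (a b : A.alg.X) (i : ℤ) s,
        g (p ++ (a + b, i) :: s) = g (p ++ (a, i) :: s) + g (p ++ (b, i) :: s)) →
    (∀ p (r : R) (a : A.alg.X) (i : ℤ) s, g (p ++ (r • a, i) :: s) = r • g (p ++ (a, i) :: s)) →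
    ∃! φ : H.alg.X →ₗ[R] M, ∀ w, BarW A.alg w → φ (wd w) = g w
  pr : H.alg.X →ₗ[R] A.alg.X
  pr_single : ∀ (a : A.alg.X) (i : ℤ), a ∈ A.alg.grading i → A.alg.aug a = 0 →
    pr (wd [(a, i)]) = a
  pr_nil : pr (wd []) = 0
  pr_long : ∀ w, BarW A.alg w → 2 ≤ w.length → pr (wd w) = 0
  nondecr : ∀ (m : ℕ) w, BarW A.alg w → m ≤ w.length → ∀ y : H.alg.X,
    wd w * y ∈ Submodule.span R {z | ∃ w', BarW A.alg w' ∧ m ≤ w'.length ∧ z = wd w'}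
  mul_single : ∀ {i : ℤ} {x : A.alg.X}, x ∈ A.alg.grading i → A.alg.aug x = 0 →
    ∀ w, BarW A.alg w → pr (wd [(x, i)] * wd w) = A.br.brace x (w.map Prod.fst)

/-- A realization of the cobar construction `ΩC` of a dg bialgebra `C`, with Kadeishvili's
`S₂`-algebra structure: the underlying algebra is the tensor algebra `T(Σ⁻¹C̄)` with the
cobar differential, the first brace is
`[x]{[y₁|⋯|y_q]} = (-1)^α [x⁽¹⁾y₁|⋯|x⁽ᑫ⁾y_q]`, and the higher braces vanish on single
brackets. -/
structure CobarOf {R : Type} [CommRing R] (H : DGBialgebra R) where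
  A : S2Algebra R
  wd : List (H.alg.X × ℤ) → A.alg.X
  wd_nil : wd [] = 1
  wd_append : ∀ w w', wd (w ++ w') = wd w * wd w'
  wd_add : ∀ (a b : H.alg.X) (i : ℤ), wd [(a + b, i)] = wd [(a, i)] + wd [(b, i)]
  wd_smul : ∀ (r : R) (a : H.alg.X) (i : ℤ), wd [(r • a, i)] = r • wd [(a, i)]
  wd_mem : ∀ w, BarW H.alg w → wd w ∈ A.alg.grading (wdegC w)
  wd_aug : ∀ (c : H.alg.X) (i : ℤ), c ∈ H.alg.grading i → H.alg.aug c = 0 →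
    A.alg.aug (wd [(c, i)]) = 0
  d_single : ∀ (c : H.alg.X) (i : ℤ), c ∈ H.alg.grading i → H.alg.aug c = 0 →
    ∀ (n : ℕ) (a b : Fin n → H.alg.X × ℤ),
      (∀ s, (a s).1 ∈ H.alg.grading (a s).2 ∧ H.alg.aug (a s).1 = 0) →
      (∀ s, (b s).1 ∈ H.alg.grading (b s).2 ∧ H.alg.aug (b s).1 = 0) →
      H.redComul c = ∑ s, (a s).1 ⊗ₜ[R] (b s).1 →
      A.alg.d (wd [(c, i)]) =
        -(wd [(H.alg.d c, i - 1)]) + ∑ s, ksgn ((a s).2) • wd [a s, b s]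
  brace_single : ∀ (x : H.alg.X) (dx : ℤ), x ∈ H.alg.grading dx → H.alg.aug x = 0 →
    ∀ (w : List (H.alg.X × ℤ)), BarW H.alg w → w ≠ [] →
    ∀ L, H.IsDiagExp (w.length - 1) x L →
    A.br.brace (wd [(x, dx)]) [wd w] =
      (L.map (fun t =>
        ksgn (cobarAlpha dx (t.map Prod.snd) (w.map Prod.snd)) •
          wd (List.zipWith (fun p q => (p.1 * q.1, p.2 + q.2)) t w))).sum
  brace_higher : ∀ (c : H.alg.X) (i : ℤ), c ∈ H.alg.grading i → H.alg.aug c = 0 →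
    ∀ l : List A.alg.X, 2 ≤ l.length → A.br.brace (wd [(c, i)]) l = 0
  span : ∀ x : A.alg.X, x ∈ Submodule.span R {y | ∃ w, BarW H.alg w ∧ y = wd w}
  free : ∀ (B : Type) [Ring B] [Algebra R B] (g : H.alg.X × ℤ → B),
    (∀ a b i, g (a + b, i) = g (a, i) + g (b, i)) →
    (∀ (r : R) a i, g (r • a, i) = r • g (a, i)) →
    ∃! φ : A.alg.X →ₐ[R] B,
      ∀ (c : H.alg.X) (i : ℤ), c ∈ H.alg.grading i → H.alg.aug c = 0 → φ (wd [(c, i)]) = g (c, i)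

/-- A realization of the free `S₂`-algebra `𝕊₂(Σ⁻¹C̄)` on the desuspended coaugmentation
coideal of a dg bialgebra `C`, together with the extra differential `∂_Δ` (`delta`)
determined by `∂_Δ [c] = (-1)^{|c̄⁽¹⁾|}[c̄⁽¹⁾|c̄⁽²⁾]`, extended as a derivation. -/
structure FreeS2On {R : Type} [CommRing R] (H : DGBialgebra R) where
  F : S2Algebra R
  gen : H.alg.X × ℤ → F.alg.X
  gen_add : ∀ (a b : H.alg.X) (i : ℤ), gen (a + b, i) = gen (a, i) + gen (b, i)
  gen_smul : ∀ (r : R) (a : H.alg.X) (i : ℤ), gen (r • a, i) = r • gen (a, i)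
  gen_mem : ∀ {i : ℤ} {c : H.alg.X}, c ∈ H.alg.grading i → H.alg.aug c = 0 →
    gen (c, i) ∈ F.alg.grading (i - 1)
  gen_d : ∀ (c : H.alg.X) (i : ℤ), c ∈ H.alg.grading i → H.alg.aug c = 0 →
    F.alg.d (gen (c, i)) = -gen (H.alg.d c, i - 1)
  free : ∀ (B : S2Algebra R) (g : H.alg.X × ℤ → B.alg.X),
    (∀ a b i, g (a + b, i) = g (a, i) + g (b, i)) →
    (∀ (r : R) a i, g (r • a, i) = r • g (a, i)) →
    (∀ {i : ℤ} {c : H.alg.X}, c ∈ H.alg.grading i → H.alg.aug c = 0 →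
      g (c, i) ∈ B.alg.grading (i - 1)) →
    ∃! φ : F.alg.X →ₐ[R] B.alg.X,
      (∀ {i : ℤ} {x : F.alg.X}, x ∈ F.alg.grading i → φ x ∈ B.alg.grading i) ∧
      (∀ x l, φ (F.br.brace x l) = B.br.brace (φ x) (l.map (fun y => φ y))) ∧
      (∀ (c : H.alg.X) (i : ℤ), c ∈ H.alg.grading i → H.alg.aug c = 0 → φ (gen (c, i)) = g (c, i))
  delta : F.alg.X →ₗ[R] F.alg.X
  delta_gen : ∀ (c : H.alg.X) (i : ℤ), c ∈ H.alg.grading i → H.alg.aug c = 0 →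
    ∀ (n : ℕ) (a b : Fin n → H.alg.X × ℤ),
      (∀ s, (a s).1 ∈ H.alg.grading (a s).2 ∧ H.alg.aug (a s).1 = 0) →
      (∀ s, (b s).1 ∈ H.alg.grading (b s).2 ∧ H.alg.aug (b s).1 = 0) →
      H.redComul c = ∑ s, (a s).1 ⊗ₜ[R] (b s).1 →
      delta (gen (c, i)) = ∑ s, ksgn ((a s).2) • (gen (a s) * gen (b s))
  delta_mem : ∀ {i : ℤ} {x : F.alg.X}, x ∈ F.alg.grading i → delta x ∈ F.alg.grading (i - 1)
  delta_mul : ∀ {i : ℤ} {x : F.alg.X}, x ∈ F.alg.grading i → ∀ y,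
    delta (x * y) = delta x * y + ksgn i • (x * delta y)
  delta_brace : ∀ {i : ℤ} {x : F.alg.X}, x ∈ F.alg.grading i →
    ∀ w : List (F.alg.X × ℤ), HomogW F.alg w →
    delta (F.br.brace x (w.map Prod.fst)) =
      ksgn (w.length : ℤ) • F.br.brace (delta x) (w.map Prod.fst) +
        ((dSlotTerms (fun y => delta y) ((w.length : ℤ) + i) w).map
          (fun q => ksgn q.1 • F.br.brace x q.2)).sum
  delta_sq : ∀ x, delta (delta x) = 0
  delta_d : ∀ x, F.alg.d (delta x) + delta (F.alg.d x) = 0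

/-- A submodule of an `S₂`-algebra is an operadic ideal when it is closed under all the
operations whenever one entry lies in it. -/
def S2Closed {R : Type} [CommRing R] (A : S2Algebra R) (p : Submodule R A.alg.X) : Prop :=
  (∀ x y : A.alg.X, x ∈ p → x * y ∈ p) ∧ (∀ x y : A.alg.X, y ∈ p → x * y ∈ p) ∧
    (∀ (x : A.alg.X) l, x ∈ p → A.br.brace x l ∈ p) ∧
    (∀ (x : A.alg.X) l₁ (y : A.alg.X) l₂, y ∈ p → A.br.brace x (l₁ ++ y :: l₂) ∈ p)

/-- The operadic (`S₂`-)ideal generated by a set. -/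
def S2Span {R : Type} [CommRing R] (A : S2Algebra R) (S : Set A.alg.X) : Submodule R A.alg.X :=
  sInf {p : Submodule R A.alg.X | S ⊆ p ∧ S2Closed A p}

/-- The generators `[c₁c₂] - Σ (-1)^α [c₁]{[c̄₂⁽¹⁾], …, [c̄₂⁽ᵏ⁾]}` of the ideal defining
the `S₂` cobar construction. -/
def relSet {R : Type} [CommRing R] (H : DGBialgebra R) (Fr : FreeS2On H) : Set Fr.F.alg.X :=
  {z | ∃ (c₁ c₂ : H.alg.X) (d₁ d₂ : ℤ), c₁ ∈ H.alg.grading d₁ ∧ H.alg.aug c₁ = 0 ∧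
    c₂ ∈ H.alg.grading d₂ ∧ H.alg.aug c₂ = 0 ∧
    ∃ (N : ℕ) (Ls : ℕ → List (List (H.alg.X × ℤ))),
      (∀ k, H.IsRedExp k c₂ (Ls k)) ∧ (∀ k, N ≤ k → Ls k = []) ∧
      z = Fr.gen (c₁ * c₂, d₁ + d₂) -
        ((List.range N).map (fun k =>
          ((Ls k).map (fun w =>
            ksgn (hopfAlpha d₁ (w.map Prod.snd)) •
              Fr.F.br.brace (Fr.gen (c₁, d₁)) (w.map (fun p => Fr.gen p)))).sum)).sum}

/-- A realization of the `S₂` cobar construction `Ω̃C = 𝕊₂(Σ⁻¹C̄)/I`, as a quotient of the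
free `S₂`-algebra on `Σ⁻¹C̄` (with total differential `∂ = d + ∂_Δ`) by the ideal `I`
generated by `relSet`. -/
structure TCobar {R : Type} [CommRing R] (H : DGBialgebra R) where
  Fr : FreeS2On H
  T : S2Algebra R
  q : Fr.F.alg.X →ₐ[R] T.alg.X
  q_grading : ∀ {i : ℤ} {x : Fr.F.alg.X}, x ∈ Fr.F.alg.grading i → q x ∈ T.alg.grading i
  q_brace : ∀ x l, q (Fr.F.br.brace x l) = T.br.brace (q x) (l.map (fun y => q y))
  q_d : ∀ x, T.alg.d (q x) = q (Fr.F.alg.d x + Fr.delta x)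
  q_surj : Function.Surjective q
  ker_q : ∀ x, q x = 0 ↔ x ∈ S2Span Fr.F (relSet H Fr)

/-- The tensor Hopf algebra `TV` on a free graded `R`-module `V` (with basis `ι` in the
given degrees, zero differential), the elements of `V` being primitive. -/
structure TensorBialg {R : Type} [CommRing R] (ι : Type) (degV : ι → ℤ) where
  H : DGBialgebra R
  v : ι → H.alg.X
  v_mem : ∀ i, v i ∈ H.alg.grading (degV i)
  v_aug : ∀ i, H.alg.aug (v i) = 0
  v_prim : ∀ i, H.redComul (v i) = 0
  d_zero : H.alg.d = 0
  falg : ∀ (B : Type) [Ring B] [Algebra R B] (g : ι → B),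
    ∃! φ : H.alg.X →ₐ[R] B, ∀ i, φ (v i) = g i
  lin_indep : LinearIndependent R v
  conil : H.Conil
/-- Specification of the simplicial cochain `S₂`-algebra `S^*(S¹, ℤ)` of
`S¹ = Δ[1]/∂Δ[1]` (Berger–Fresse): zero differential, free over `ℤ` on the unit in
degree `0` and the dual `x` of the nondegenerate `1`-simplex in cohomological degree `1`,
`x·x = 0`, the only nonzero brace on `x` being `x{x} = -x`. -/
def IsS1Cochains (A : S2Algebra ℤ) (x : A.alg.X) : Prop :=
  A.alg.d = 0 ∧
    x ∈ A.alg.grading (-1) ∧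
    (∀ y : A.alg.X, y ∈ A.alg.grading 0 ↔ ∃ n : ℤ, y = n • (1 : A.alg.X)) ∧
    (∀ y : A.alg.X, y ∈ A.alg.grading (-1) ↔ ∃ n : ℤ, y = n • x) ∧
    (∀ i : ℤ, i ≠ 0 → i ≠ -1 → A.alg.grading i = ⊥) ∧
    (∀ n : ℤ, n • x = 0 → n = 0) ∧
    (∀ n : ℤ, n • (1 : A.alg.X) = 0 → n = 0) ∧
    x * x = 0 ∧
    A.br.brace x [x] = -x ∧
    (∀ l : List A.alg.X, 2 ≤ l.length → A.br.brace x l = 0)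

/-- A commutative dg algebra regarded as an `S₂`-algebra with trivial braces. -/
def IsCommTrivialBraces {R : Type} [CommRing R] (B : S2Algebra R) : Prop :=
  (∀ a b : B.alg.X, a * b = b * a) ∧
    ∀ (y : B.alg.X) (l : List B.alg.X), l ≠ [] → B.br.brace y l = 0

/-- The mod `2` reduction of the cochains of the circle, as an `S₂`-algebra over `ℤ/2`. -/
def IsS1CochainsMod2 (A : S2Algebra (ZMod 2)) (x : A.alg.X) : Prop :=
  A.alg.d = 0 ∧
    x ∈ A.alg.grading (-1) ∧
    (∀ y : A.alg.X, y ∈ A.alg.grading (-1) ↔ ∃ n : ZMod 2, y = n • x) ∧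
    x ≠ 0 ∧ x * x = 0 ∧ A.br.brace x [x] = -x


/-!
Homology with coefficients in `ℤ/2` is computed by the mapping cone of multiplication by `2`:
a class of degree `-1` is represented by a pair `(z, u)` with `dz = -2u` and `du = 0`. On such
pairs `Sq⁰(z) = z{z}` lifts to `(z, u) ↦ (z{z}, z² - u{z} + z{u})`, which is well defined on cone
homology and commutes with maps of `S₂`-algebras, while a quasi-isomorphism induces an
isomorphism on cone homology. Hence having a nonzero class of degree `-1` fixed by `Sq⁰` is
invariant under zig-zags. The cochains of `S¹` have one, `[x]`, as `x{x} = -x ≡ x`. With trivial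
braces the lift is `(z, u) ↦ (0, z²)`, which kills its own image, so a class fixed by `Sq⁰` is
zero.
-/

lemma ksgn_zero : ksgn 0 = 1 := rfl

lemma ksgn_one : ksgn 1 = -1 := rfl

lemma ksgn_two : ksgn 2 = 1 := by simp [ksgn, Int.negOnePow_even 2 even_two]

lemma ksgn_neg (n : ℤ) : ksgn (-n) = ksgn n := by simp [ksgn]

section Cone

variable {X Y : Type} [AddCommGroup X] [AddCommGroup Y]

/-- The differential of the mapping cone of multiplication by `n` on `(X, d)`. -/
def coneD (d : X →+ X) (n : ℤ) : X × X →+ X × X where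
  toFun p := (d p.1 + n • p.2, -d p.2)
  map_zero' := by simp
  map_add' p q := by ext <;> simp only [Prod.fst_add, Prod.snd_add, map_add, smul_add] <;> abel

@[simp]
lemma coneD_apply (d : X →+ X) (n : ℤ) (p : X × X) :
    coneD d n p = (d p.1 + n • p.2, -d p.2) := rfl

lemma coneD_eq_zero_iff {d : X →+ X} {n : ℤ} {z u : X} :
    coneD d n (z, u) = 0 ↔ d z = -(n • u) ∧ d u = 0 := by
  simp [Prod.ext_iff, add_eq_zero_iff_eq_neg]

lemma coneD_map {F : Type} [FunLike F X Y] [AddMonoidHomClass F X Y] {dX : X →+ X}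
    {dY : Y →+ Y} {f : F} (hf : ∀ x, f (dX x) = dY (f x)) (n : ℤ) (p : X × X) :
    coneD dY n (Prod.map f f p) = Prod.map f f (coneD dX n p) := by
  simp [hf]

namespace QIso

/- The module structures are implicit arguments, read off from `QIso`: for the `ℤ`-algebras
below they are `Algebra.toModule`, not the instance `AddCommGroup.toIntModule`. -/
variable {R : Type} [CommRing R] {_ : Module R X} {_ : Module R Y}
  {dX : X →ₗ[R] X} {dY : Y →ₗ[R] Y} {f : X →ₗ[R] Y}

lemma mem_range_coneD_of_map (hf : QIso dX dY f) {n : ℤ} {p : X × X}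
    (hp : coneD dX.toAddMonoidHom n p = 0)
    (h : Prod.map f f p ∈ (coneD dY.toAddMonoidHom n).range) :
    p ∈ (coneD dX.toAddMonoidHom n).range := by
  obtain ⟨hd, hsurj, hinj⟩ := hf
  obtain ⟨v, m⟩ := p
  obtain ⟨hdv, hdm⟩ := coneD_eq_zero_iff.mp hp
  obtain ⟨⟨a, b⟩, hab⟩ := h
  simp only [coneD_apply, LinearMap.toAddMonoidHom_coe, Prod.map, Prod.mk.injEq] at hab hdv hdm
  obtain ⟨w, rfl⟩ : ∃ w, m = dX w := hinj m hdm ⟨-b, by rw [map_neg, hab.2]⟩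
  obtain ⟨k, c, hk, hkc⟩ := hsurj (b + f w) (by rw [map_add, ← hd, ← hab.2]; abel)
  obtain ⟨e, he⟩ := hinj (v + n • w - n • k)
    (by rw [map_sub, map_add, map_zsmul, map_zsmul, hdv, hk]; simp)
    ⟨a + n • c, by
      rw [map_sub, map_add, map_zsmul, map_zsmul, ← hab.1, map_add, map_zsmul,
        show f k = b + f w - dY c by rw [hkc]; abel]
      module⟩
  refine ⟨(e, k - w), ?_⟩
  simp only [coneD_apply, LinearMap.toAddMonoidHom_coe, ← he, map_sub, hk, Prod.mk.injEq]
  constructor <;> module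

lemma exists_sub_map_mem_range_coneD (hf : QIso dX dY f) {n : ℤ} {q : Y × Y}
    (hq : coneD dY.toAddMonoidHom n q = 0) :
    ∃ p, coneD dX.toAddMonoidHom n p = 0 ∧
      q - Prod.map f f p ∈ (coneD dY.toAddMonoidHom n).range := by
  obtain ⟨hd, hsurj, hinj⟩ := hf
  obtain ⟨z, u⟩ := q
  obtain ⟨hdz, hdu⟩ := coneD_eq_zero_iff.mp hq
  simp only [LinearMap.toAddMonoidHom_coe] at hdz hdu
  obtain ⟨u₀, m, hu₀, hm⟩ := hsurj u hdu
  obtain ⟨z₀, hz₀⟩ := hinj ((-n) • u₀) (by rw [map_zsmul, hu₀, smul_zero])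
    ⟨z + n • m, by rw [map_zsmul, map_add, map_zsmul, hdz, hm]; module⟩
  obtain ⟨k, c, hk, hkc⟩ := hsurj (f z₀ - (z + n • m))
    (by rw [map_sub, map_add, map_zsmul, ← hd, ← hz₀, map_zsmul, hdz, hm]; module)
  refine ⟨(z₀ - k, u₀), ?_, ⟨(-c, -m), ?_⟩⟩
  · simp [← hz₀, hk, hu₀]
  · simp only [coneD_apply, LinearMap.toAddMonoidHom_coe, Prod.map, map_sub, Prod.mk_sub_mk,
      map_neg, hm, Prod.mk.injEq]
    constructor
    · rw [show f k = f z₀ - (z + n • m) - dY c by rw [hkc]; abel]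
      module
    · abel

end QIso

end Cone

namespace DGAlgebra

variable {R : Type} [CommRing R]

def proj (A : DGAlgebra R) (i : ℤ) : A.X →+ A.X :=
  letI := A.isInternal.chooseDecomposition
  { toFun := fun x => (DirectSum.decompose A.grading x i : A.X)
    map_zero' := by simp
    map_add' := fun x y => by simp }

variable (A : DGAlgebra R)

lemma proj_mem (i : ℤ) (x : A.X) : A.proj i x ∈ A.grading i :=
  letI := A.isInternal.chooseDecomposition
  (DirectSum.decompose A.grading x i).2

lemma proj_of_mem {i : ℤ} {x : A.X} (hx : x ∈ A.grading i) : A.proj i x = x :=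
  letI := A.isInternal.chooseDecomposition
  DirectSum.decompose_of_mem_same _ hx

lemma proj_of_mem_of_ne {i j : ℤ} {x : A.X} (hx : x ∈ A.grading j) (h : j ≠ i) :
    A.proj i x = 0 :=
  letI := A.isInternal.chooseDecomposition
  DirectSum.decompose_of_mem_ne _ hx h

lemma proj_map {B : DGAlgebra R} (g : A.X →+ B.X) {k : ℤ}
    (hg : ∀ {i : ℤ} {x : A.X}, x ∈ A.grading i → g x ∈ B.grading (i + k))
    {i j : ℤ} (hij : i + k = j) (x : A.X) : B.proj j (g x) = g (A.proj i x) := by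
  let := A.isInternal.chooseDecomposition
  induction x using DirectSum.Decomposition.inductionOn A.grading with
  | zero => simp
  | @homogeneous l y =>
    by_cases h : l = i
    · subst h hij
      rw [A.proj_of_mem y.2, B.proj_of_mem (hg y.2)]
    · rw [A.proj_of_mem_of_ne y.2 h, B.proj_of_mem_of_ne (hg y.2) (by omega), map_zero]
  | add a b ha hb => simp only [map_add, ha, hb]

lemma proj_d {i j : ℤ} (hij : i - 1 = j) (x : A.X) : A.proj j (A.d x) = A.d (A.proj i x) :=
  A.proj_map A.d.toAddMonoidHom (k := -1)
    (fun hx => by simpa [← sub_eq_add_neg] using A.d_mem hx) (by omega) x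

abbrev cone : A.X × A.X →+ A.X × A.X := coneD A.d.toAddMonoidHom 2

@[simp]
lemma cone_apply (p : A.X × A.X) : A.cone p = (A.d p.1 + (2 : ℤ) • p.2, -A.d p.2) := rfl

lemma cone_eq_zero_iff {z u : A.X} :
    A.cone (z, u) = 0 ↔ A.d z = -((2 : ℤ) • u) ∧ A.d u = 0 := coneD_eq_zero_iff

def coneProj (i : ℤ) : A.X × A.X →+ A.X × A.X := (A.proj i).prodMap (A.proj (i - 1))

@[simp]
lemma coneProj_apply (i : ℤ) (p : A.X × A.X) :
    A.coneProj i p = (A.proj i p.1, A.proj (i - 1) p.2) := rfl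

lemma coneProj_mem (i : ℤ) (p : A.X × A.X) :
    (A.coneProj i p).1 ∈ A.grading i ∧ (A.coneProj i p).2 ∈ A.grading (i - 1) :=
  ⟨A.proj_mem i p.1, A.proj_mem (i - 1) p.2⟩

lemma coneProj_of_mem {i : ℤ} {z u : A.X} (hz : z ∈ A.grading i)
    (hu : u ∈ A.grading (i - 1)) : A.coneProj i (z, u) = (z, u) := by
  simp [A.proj_of_mem hz, A.proj_of_mem hu]

lemma cone_coneProj {i j : ℤ} (hij : i - 1 = j) (p : A.X × A.X) :
    A.cone (A.coneProj i p) = A.coneProj j (A.cone p) := by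
  subst hij
  simp only [cone_apply, coneProj_apply, map_add, map_neg, map_zsmul, A.proj_d rfl]

lemma coneProj_map {B : DGAlgebra R} {F : Type} [FunLike F A.X B.X] [AddMonoidHomClass F A.X B.X]
    (f : F) (hf : ∀ {i : ℤ} {x : A.X}, x ∈ A.grading i → f x ∈ B.grading i) (i : ℤ)
    (p : A.X × A.X) : B.coneProj i (Prod.map f f p) = Prod.map f f (A.coneProj i p) := by
  have key : ∀ j x, B.proj j (f x) = f (A.proj j x) := fun j =>
    A.proj_map (f : A.X →+ B.X) (fun hx => by simpa using hf hx) (add_zero j)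
  simp [key]

lemma coneProj_mem_range {p : A.X × A.X} (h : p ∈ A.cone.range) (i : ℤ) :
    A.coneProj i p ∈ A.cone.range := by
  obtain ⟨w, rfl⟩ := h
  exact ⟨A.coneProj (i + 1) w, A.cone_coneProj (by omega) w⟩

lemma exists_mem_grading_of_mem_range_cone {i : ℤ} {z u : A.X} (hz : z ∈ A.grading i)
    (hu : u ∈ A.grading (i - 1)) (h : (z, u) ∈ A.cone.range) :
    ∃ a ∈ A.grading (i + 1), ∃ b ∈ A.grading i, A.cone (a, b) = (z, u) := by
  obtain ⟨w, hw⟩ := h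
  obtain ⟨ha, hb⟩ := A.coneProj_mem (i + 1) w
  refine ⟨_, ha, (A.coneProj (i + 1) w).2, by simpa using hb, ?_⟩
  rw [Prod.mk.eta, A.cone_coneProj (j := i) (by omega), hw, A.coneProj_of_mem hz hu]

end DGAlgebra

namespace S2Algebra

variable {R : Type} [CommRing R] (C : S2Algebra R)

def braceLeft (l : List C.alg.X) : C.alg.X →+ C.alg.X where
  toFun x := C.br.brace x l
  map_zero' := by simpa using C.br.brace_smull 0 0 l
  map_add' x y := C.br.brace_addl x y l

def braceSingle (x : C.alg.X) : C.alg.X →+ C.alg.X where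
  toFun y := C.br.brace x [y]
  map_zero' := by simpa using C.br.brace_smula x [] 0 0 []
  map_add' a b := C.br.brace_adda x [] a b []

lemma brace_zero_left (l : List C.alg.X) : C.br.brace 0 l = 0 := map_zero (C.braceLeft l)

lemma brace_sub_left (x y : C.alg.X) (l : List C.alg.X) :
    C.br.brace (x - y) l = C.br.brace x l - C.br.brace y l := map_sub (C.braceLeft l) x y

lemma brace_neg_left (x : C.alg.X) (l : List C.alg.X) :
    C.br.brace (-x) l = -C.br.brace x l := map_neg (C.braceLeft l) x

lemma brace_zsmul_left (n : ℤ) (x : C.alg.X) (l : List C.alg.X) :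
    C.br.brace (n • x) l = n • C.br.brace x l := map_zsmul (C.braceLeft l) n x

lemma brace_single_zero (x : C.alg.X) : C.br.brace x [0] = 0 := map_zero (C.braceSingle x)

lemma brace_single_add (x a b : C.alg.X) :
    C.br.brace x [a + b] = C.br.brace x [a] + C.br.brace x [b] := map_add (C.braceSingle x) a b

lemma brace_single_sub (x a b : C.alg.X) :
    C.br.brace x [a - b] = C.br.brace x [a] - C.br.brace x [b] := map_sub (C.braceSingle x) a b

lemma brace_single_neg (x a : C.alg.X) :
    C.br.brace x [-a] = -C.br.brace x [a] := map_neg (C.braceSingle x) a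

lemma brace_single_zsmul (x : C.alg.X) (n : ℤ) (a : C.alg.X) :
    C.br.brace x [n • a] = n • C.br.brace x [a] := map_zsmul (C.braceSingle x) n a

lemma d_brace_single {i j : ℤ} {x y : C.alg.X} (hx : x ∈ C.alg.grading i)
    (hy : y ∈ C.alg.grading j) :
    C.alg.d (C.br.brace x [y]) =
      -(x * y) + ksgn (i * j) • (y * x) - C.br.brace (C.alg.d x) [y] +
        ksgn (1 + i) • C.br.brace x [C.alg.d y] := by
  have h := C.br.brace_diff hx (y, j) [] (by simpa [HomogW] using hy)
  simp only [List.map_nil] at h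
  rw [h]
  simp only [List.length_nil, Nat.cast_zero, zero_add, zero_mul, add_zero, ksgn_one, neg_smul,
    one_smul, List.dropLast_singleton, List.getLast_singleton, C.br.brace_nil, adjMerges, altSum,
    dSlotTerms, List.map_cons, List.map_nil, List.sum_cons, List.sum_nil]
  abel

/-- The second component corrects `(z{z}, 0)` to a cone cycle: if `dz = -2u` and `du = 0`, then
`d(z{z}) = -2 (z² - u{z} + z{u})`. -/
def sq (p : C.alg.X × C.alg.X) : C.alg.X × C.alg.X :=
  (C.br.brace p.1 [p.1], p.1 * p.1 - C.br.brace p.2 [p.1] + C.br.brace p.1 [p.2])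

variable {C}

lemma cone_sq_eq_zero {z u : C.alg.X} (hz : z ∈ C.alg.grading (-1))
    (hu : u ∈ C.alg.grading (-2)) (hdz : C.alg.d z = -((2 : ℤ) • u)) (hdu : C.alg.d u = 0) :
    C.alg.cone (C.sq (z, u)) = 0 := by
  rw [sq, DGAlgebra.cone_eq_zero_iff]
  constructor
  · rw [C.d_brace_single hz hz]
    simp only [hdz, brace_neg_left, brace_zsmul_left, brace_single_neg, brace_single_zsmul,
      Int.reduceMul, Int.reduceAdd, ksgn_zero, ksgn_one, one_smul, neg_smul]
    module
  · rw [map_add, map_sub, C.alg.leibniz hz, C.d_brace_single hu hz, C.d_brace_single hz hu]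
    simp only [hdz, hdu, brace_neg_left, brace_zsmul_left, brace_single_neg, brace_single_zsmul,
      brace_zero_left, brace_single_zero, Int.reduceMul, Int.reduceAdd, ksgn_neg, ksgn_zero,
      ksgn_one, ksgn_two, one_smul, neg_smul, mul_neg, neg_mul, mul_smul_comm, smul_mul_assoc]
    module

lemma sq_sub_sq_sub_cone_snd {z u b : C.alg.X} (hz : z ∈ C.alg.grading (-1))
    (hdz : C.alg.d z = -((2 : ℤ) • u)) (hb : b ∈ C.alg.grading (-1)) :
    C.sq (z, u) - C.sq ((z, u) - C.alg.cone (0, b)) ∈ C.alg.cone.range := by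
  refine ⟨(0, C.br.brace z [b] + C.br.brace b [z] - (2 : ℤ) • C.br.brace b [b]), ?_⟩
  simp only [DGAlgebra.cone_apply, sq, map_zero, zero_add, Prod.mk_sub_mk, sub_neg_eq_add,
    Prod.mk.injEq]
  constructor
  · simp only [brace_sub_left, brace_zsmul_left, brace_single_sub, brace_single_zsmul]
    module
  · simp only [map_add, map_sub, map_zsmul, C.d_brace_single hz hb, C.d_brace_single hb hz,
      C.d_brace_single hb hb, hdz, brace_neg_left, brace_zsmul_left, brace_single_neg,
      brace_single_zsmul, brace_sub_left, brace_single_sub, brace_single_add, C.br.brace_addl,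
      sub_mul, mul_sub, Int.reduceMul, Int.reduceAdd, ksgn_neg, ksgn_zero, ksgn_one, one_smul,
      neg_smul, mul_neg, neg_mul, mul_smul_comm, smul_mul_assoc]
    module

lemma sq_sub_sq_sub_cone_fst {z u a : C.alg.X} (hz : z ∈ C.alg.grading (-1))
    (hu : u ∈ C.alg.grading (-2)) (hdz : C.alg.d z = -((2 : ℤ) • u)) (hdu : C.alg.d u = 0)
    (ha : a ∈ C.alg.grading 0) :
    C.sq (z, u) - C.sq ((z, u) - C.alg.cone (a, 0)) ∈ C.alg.cone.range := by
  have hda : C.alg.d a ∈ C.alg.grading (-1) := by simpa using C.alg.d_mem ha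
  refine ⟨(C.br.brace z [a] - C.br.brace a [z] + C.br.brace a [C.alg.d a] - a * a,
    z * a - a * z - C.br.brace u [a] + C.br.brace a [u] + a * C.alg.d a), ?_⟩
  simp only [DGAlgebra.cone_apply, sq, map_zero, smul_zero, add_zero, neg_zero, Prod.mk_sub_mk,
    sub_zero, Prod.mk.injEq]
  constructor
  · simp only [map_add, map_sub, C.d_brace_single hz ha, C.d_brace_single ha hz,
      C.d_brace_single ha hda, C.alg.leibniz ha, C.alg.d_sq, hdz, brace_neg_left,
      brace_zsmul_left, brace_single_neg, brace_single_zsmul, brace_sub_left, brace_single_sub,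
      brace_single_zero, Int.reduceMul, Int.reduceAdd, ksgn_neg, ksgn_zero, ksgn_one, one_smul,
      neg_smul, mul_neg, mul_zero]
    module
  · simp only [map_add, map_sub, C.d_brace_single hu ha, C.d_brace_single ha hu,
      C.alg.leibniz ha, C.alg.leibniz hz, C.alg.d_sq, hdz, hdu, brace_sub_left, brace_single_sub,
      sub_mul, mul_sub, brace_zero_left, brace_single_zero, Int.reduceMul, Int.reduceAdd,
      ksgn_neg, ksgn_zero, ksgn_one, one_smul, neg_smul, mul_neg, neg_mul, mul_smul_comm,
      smul_mul_assoc, mul_zero]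
    module

lemma sq_sub_sq_sub_cone {z u : C.alg.X} (hz : z ∈ C.alg.grading (-1))
    (hu : u ∈ C.alg.grading (-2)) (hdz : C.alg.d z = -((2 : ℤ) • u)) (hdu : C.alg.d u = 0)
    {a b : C.alg.X} (ha : a ∈ C.alg.grading 0) (hb : b ∈ C.alg.grading (-1)) :
    C.sq (z, u) - C.sq ((z, u) - C.alg.cone (a, b)) ∈ C.alg.cone.range := by
  have hdb : C.alg.d b ∈ C.alg.grading (-2) := by simpa using C.alg.d_mem hb
  have hsnd : (z, u) - C.alg.cone (0, b) = (z - (2 : ℤ) • b, u + C.alg.d b) := by simp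
  have hsplit : (z, u) - C.alg.cone (a, b) = (z, u) - C.alg.cone (0, b) - C.alg.cone (a, 0) := by
    rw [sub_sub, ← map_add, Prod.mk_add_mk, zero_add, add_zero]
  rw [hsplit, ← sub_add_sub_cancel _ (C.sq ((z, u) - C.alg.cone (0, b)))]
  refine add_mem (sq_sub_sq_sub_cone_snd hz hdz hb) ?_
  rw [hsnd]
  refine sq_sub_sq_sub_cone_fst (sub_mem hz (zsmul_mem hb 2)) (add_mem hu hdb) ?_ ?_ ha
  · rw [map_sub, map_zsmul, hdz]
    module
  · rw [map_add, hdu, C.alg.d_sq, add_zero]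

variable (C)

/-- A cycle `(z, u)` of degree `-1` of the cone is a mod `2` cocycle of cohomological degree `1`;
its class is required to be nonzero and fixed by `Sq⁰`. -/
def HasSqZeroFixedClass : Prop :=
  ∃ z u : C.alg.X, z ∈ C.alg.grading (-1) ∧ u ∈ C.alg.grading (-2) ∧ C.alg.cone (z, u) = 0 ∧
    (z, u) ∉ C.alg.cone.range ∧ C.sq (z, u) - (z, u) ∈ C.alg.cone.range

end S2Algebra

namespace S2AlgHom

variable {R : Type} [CommRing R] {C D : S2Algebra R}

abbrev IsQIso (f : S2AlgHom C D) : Prop := QIso C.alg.d D.alg.d f.f.toLinearMap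

variable (f : S2AlgHom C D)

lemma sq_map (p : C.alg.X × C.alg.X) :
    D.sq (Prod.map f.f f.f p) = Prod.map f.f f.f (C.sq p) := by
  simp [S2Algebra.sq, f.map_brace]

lemma cone_map (p : C.alg.X × C.alg.X) :
    D.alg.cone (Prod.map f.f f.f p) = Prod.map f.f f.f (C.alg.cone p) :=
  coneD_map f.map_d 2 p

lemma map_mem_range_cone {p : C.alg.X × C.alg.X} (hp : p ∈ C.alg.cone.range) :
    Prod.map f.f f.f p ∈ D.alg.cone.range := by
  obtain ⟨w, rfl⟩ := hp
  exact ⟨Prod.map f.f f.f w, f.cone_map w⟩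

variable {f}

lemma hasSqZeroFixedClass (hf : f.IsQIso) (h : C.HasSqZeroFixedClass) :
    D.HasSqZeroFixedClass := by
  obtain ⟨z, u, hz, hu, hzu, hnb, hfix⟩ := h
  refine ⟨f.f z, f.f u, f.map_grading hz, f.map_grading hu, ?_, fun hb => hnb ?_, ?_⟩
  · rw [show (f.f z, f.f u) = Prod.map f.f f.f (z, u) from rfl, f.cone_map, hzu]
    exact Prod.ext (map_zero f.f) (map_zero f.f)
  · exact QIso.mem_range_coneD_of_map hf hzu (by simpa using hb)
  · convert f.map_mem_range_cone hfix using 1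
    rw [show (f.f z, f.f u) = Prod.map f.f f.f (z, u) from rfl, f.sq_map]
    ext <;> simp

lemma exists_graded_cycle_sub_map_mem_range (hf : f.IsQIso) {z' u' : D.alg.X}
    (hz' : z' ∈ D.alg.grading (-1)) (hu' : u' ∈ D.alg.grading (-2))
    (hzu' : D.alg.cone (z', u') = 0) :
    ∃ z u : C.alg.X, z ∈ C.alg.grading (-1) ∧ u ∈ C.alg.grading (-2) ∧ C.alg.cone (z, u) = 0 ∧
      ∃ a ∈ D.alg.grading 0, ∃ b ∈ D.alg.grading (-1),
        D.alg.cone (a, b) = (z', u') - (f.f z, f.f u) := by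
  obtain ⟨p, hp, hrange⟩ := QIso.exists_sub_map_mem_range_coneD hf hzu'
  obtain ⟨hz, hu⟩ := C.alg.coneProj_mem (-1) p
  refine ⟨_, _, hz, hu, ?_, ?_⟩
  · rw [Prod.mk.eta, C.alg.cone_coneProj rfl, hp, map_zero]
  · have hproj : (z' - f.f (C.alg.coneProj (-1) p).1, u' - f.f (C.alg.coneProj (-1) p).2) =
        D.alg.coneProj (-1) ((z', u') - Prod.map f.f f.f p) := by
      rw [map_sub, D.alg.coneProj_of_mem hz' hu', C.alg.coneProj_map f.f f.map_grading]
      rfl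
    exact D.alg.exists_mem_grading_of_mem_range_cone
      (sub_mem hz' (f.map_grading hz)) (sub_mem hu' (f.map_grading hu))
      (hproj ▸ D.alg.coneProj_mem_range hrange (-1))

lemma hasSqZeroFixedClass_of_codomain (hf : f.IsQIso) (h : D.HasSqZeroFixedClass) :
    C.HasSqZeroFixedClass := by
  obtain ⟨z', u', hz', hu', hzu', hnb', hfix'⟩ := h
  obtain ⟨z, u, hz, hu, hzu, a, ha, b, hb, hab⟩ :=
    exists_graded_cycle_sub_map_mem_range hf hz' hu' hzu'
  obtain ⟨hdz, hdu⟩ := C.alg.cone_eq_zero_iff.mp hzu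
  obtain ⟨hdz', hdu'⟩ := D.alg.cone_eq_zero_iff.mp hzu'
  have hmap : Prod.map f.f f.f (z, u) = (z', u') - D.alg.cone (a, b) := by
    rw [hab, sub_sub_cancel]
    rfl
  have hsq : D.sq (z', u') - D.sq (Prod.map f.f f.f (z, u)) ∈ D.alg.cone.range :=
    hmap ▸ S2Algebra.sq_sub_sq_sub_cone hz' hu' hdz' hdu' ha hb
  refine ⟨z, u, hz, hu, hzu, fun hb => hnb' ?_, QIso.mem_range_coneD_of_map hf ?_ ?_⟩
  · rw [← sub_add_cancel (z', u') (D.alg.cone (a, b)), ← hmap]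
    exact add_mem (f.map_mem_range_cone hb) ⟨(a, b), rfl⟩
  · rw [map_sub, S2Algebra.cone_sq_eq_zero hz hu hdz hdu, hzu, sub_zero]
  · have key : Prod.map f.f f.f (C.sq (z, u) - (z, u)) =
        (D.sq (z', u') - (z', u')) - (D.sq (z', u') - D.sq (Prod.map f.f f.f (z, u))) +
          D.alg.cone (a, b) := by
      rw [f.sq_map, hab]
      ext <;> simp
    rw [AlgHom.coe_toLinearMap, key]
    exact add_mem (sub_mem hfix' hsq) ⟨(a, b), rfl⟩

lemma hasSqZeroFixedClass_iff (hf : f.IsQIso) :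
    C.HasSqZeroFixedClass ↔ D.HasSqZeroFixedClass :=
  ⟨hasSqZeroFixedClass hf, hasSqZeroFixedClass_of_codomain hf⟩

end S2AlgHom

lemma S2ZigZag.hasSqZeroFixedClass_iff {R : Type} [CommRing R] {A B : S2Algebra R}
    (h : S2ZigZag A B) : A.HasSqZeroFixedClass ↔ B.HasSqZeroFixedClass := by
  induction h with
  | refl => rfl
  | fwd _ hf _ ih => exact (S2AlgHom.hasSqZeroFixedClass_iff hf).trans ih
  | bwd _ hf _ ih => exact (S2AlgHom.hasSqZeroFixedClass_iff hf).symm.trans ih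

lemma IsS1Cochains.hasSqZeroFixedClass {A : S2Algebra ℤ} {x : A.alg.X} (hA : IsS1Cochains A x) :
    A.HasSqZeroFixedClass := by
  obtain ⟨hd, hx, -, hdeg, -, htor, -, hxx, hbr, -⟩ := hA
  refine ⟨x, 0, hx, zero_mem _, by simp [hd], fun h => ?_, ⟨(0, -x), ?_⟩⟩
  · obtain ⟨a, -, b, hb, hab⟩ :=
      A.alg.exists_mem_grading_of_mem_range_cone (i := -1) hx (zero_mem _) h
    obtain ⟨n, rfl⟩ := (hdeg b).mp hb
    have h2n : (1 - 2 * n) • x = 0 := by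
      simp only [DGAlgebra.cone_apply, hd, LinearMap.zero_apply, zero_add, Prod.mk.injEq] at hab
      rw [sub_smul, one_smul, mul_smul, hab.1, sub_self]
    have := htor _ h2n
    omega
  · simp only [S2Algebra.sq, DGAlgebra.cone_apply, hd, hbr, hxx, LinearMap.zero_apply,
      S2Algebra.brace_zero_left, S2Algebra.brace_single_zero, Prod.mk_sub_mk, Prod.mk.injEq]
    constructor <;> module

lemma S2Algebra.not_hasSqZeroFixedClass_of_brace_eq_zero {R : Type} [CommRing R]
    {B : S2Algebra R} (hB : ∀ (y : B.alg.X) (l : List B.alg.X), l ≠ [] → B.br.brace y l = 0) :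
    ¬ B.HasSqZeroFixedClass := by
  rintro ⟨z, u, hz, hu, hzu, hnb, hfix⟩
  have hsq : ∀ p : B.alg.X × B.alg.X, B.sq p = (0, p.1 * p.1) := fun p => by
    simp [S2Algebra.sq, hB]
  obtain ⟨hdz, hdu⟩ := B.alg.cone_eq_zero_iff.mp hzu
  obtain ⟨a, ha, b, hb, hab⟩ := B.alg.exists_mem_grading_of_mem_range_cone (i := -1)
    (by simpa [hsq] using neg_mem hz) (by simpa [hsq] using sub_mem (B.alg.mul_mem hz hz) hu) hfix
  have hsq_mem : B.sq (z, u) ∈ B.alg.cone.range := by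
    have hsub : (z, u) - B.alg.cone (-a, -b) = B.sq (z, u) := by
      rw [← Prod.neg_mk, map_neg, sub_neg_eq_add, hab]
      ext <;> simp
    have hsq2 : B.sq (B.sq (z, u)) = 0 := by simp [hsq]
    have h := S2Algebra.sq_sub_sq_sub_cone hz hu hdz hdu (neg_mem ha) (neg_mem hb)
    rwa [hsub, hsq2, sub_zero] at h
  exact hnb (by simpa using sub_mem hsq_mem hfix)

/-- **Statement 3 (Kuhn–Mandell).** The simplicial cochain `S₂`-algebra `S^*(S¹, ℤ)` is
not weakly equivalent, as an `S₂`-algebra, to any commutative dg algebra with trivial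
braces (in particular not to its cohomology `H^*(S¹, ℤ)`).  Indeed, mod `2` the operation
`Sq⁰(z) = z{z}` satisfies `Sq⁰([x]) = [x] ≠ 0` on the reduction of `S^*(S¹, ℤ)`, while
`Sqⁿ⁻¹` vanishes identically on any commutative algebra with trivial braces. -/
theorem circle_cochains_not_formal
    (A : S2Algebra ℤ) (x : A.alg.X) (hA : IsS1Cochains A x) :
    (∀ B : S2Algebra ℤ, IsCommTrivialBraces B → ¬ S2ZigZag A B) ∧
      (∀ (A₂ : S2Algebra (ZMod 2)) (x₂ : A₂.alg.X), IsS1CochainsMod2 A₂ x₂ →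
        A₂.br.brace x₂ [x₂] = x₂ ∧ x₂ ≠ 0) ∧
      (∀ B₂ : S2Algebra (ZMod 2), IsCommTrivialBraces B₂ →
        ∀ z : B₂.alg.X, B₂.br.brace z [z] = 0) := by
  refine ⟨fun B hB hAB => ?_, fun A₂ x₂ h => ?_,
    fun B₂ hB₂ z => hB₂.2 z [z] (List.cons_ne_nil z [])⟩
  · exact S2Algebra.not_hasSqZeroFixedClass_of_brace_eq_zero hB.2
      (hAB.hasSqZeroFixedClass_iff.mp hA.hasSqZeroFixedClass)
  · obtain ⟨-, -, -, hne, -, hbr⟩ := h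
    refine ⟨?_, hne⟩
    rw [hbr, ← neg_one_smul (ZMod 2) x₂, ZMod.neg_eq_self_mod_two, one_smul]
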